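/- arXiv:0911.1815 — 3 statements merged into one kernel-verified Lean document; each statement's English description precedes it below -/
import Mathlib

section
/- If ρ: Ω → (0,∞) satisfies the 1−ε slow growth condition, i.e. ρ(α) ≤ ρ(x)(1 + |x−α|/ρ(x))^{1−ε} for all x, α ∈ Ω (with 0 < ε < 1), then ρ satisfies self-majorization of order τ = 1/ε − 1: there exists a constant C > 0 depending only on ε such that ρ(y) ≥ C ρ(x)(1 + |x−y|/ρ(x))^{−τ} for all x, y ∈ Ω. -/
/-!
Slow growth from `x` to `y` gives `ρ y ≤ ρ x + |x - y|`; slow growth from `y` to `x` gives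
`ρ x ≤ ρ y ^ ε (ρ y + |x - y|) ^ (1 - ε) ≤ ρ y ^ ε (2 (ρ x + |x - y|)) ^ (1 - ε)`.
Solving the last inequality for `ρ y` produces the bound with `C = 2 ^ (-τ)`,
the exponent `τ = 1/ε - 1 = (1 - ε)/ε` coming from taking the `ε`-th root.
-/

open Real

def SlowGrowth {X : Type*} [PseudoMetricSpace X] (Ω : Set X) (ρ : X → ℝ) (γ : ℝ) : Prop :=
  ∀ x ∈ Ω, ∀ α ∈ Ω, ρ α ≤ ρ x * (1 + dist x α / ρ x) ^ γ

lemma mul_rpow_one_add_div_le {r D γ : ℝ} (hr : 0 < r) (hD : 0 ≤ D) (hγ : γ ≤ 1) :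
    r * (1 + D / r) ^ γ ≤ r + D :=
  calc r * (1 + D / r) ^ γ ≤ r * (1 + D / r) ^ (1 : ℝ) := by
        gcongr
        exact le_add_of_nonneg_right (by positivity)
    _ = r + D := by rw [rpow_one]; field_simp

lemma mul_rpow_one_add_div_eq {u D γ : ℝ} (hu : 0 < u) (hD : 0 ≤ D) :
    u * (1 + D / u) ^ γ = u ^ (1 - γ) * (u + D) ^ γ := by
  rw [show 1 + D / u = (u + D) / u by field_simp, div_rpow (by positivity) hu.le,
    rpow_sub hu, rpow_one]
  field_simp

lemma two_rpow_neg_mul_le_of_le_rpow_mul_rpow {r u D ε : ℝ} (hr : 0 < r) (hu : 0 ≤ u)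
    (hD : 0 ≤ D) (hε : 0 < ε) (h : r ≤ u ^ ε * (2 * (r + D)) ^ (1 - ε)) :
    2 ^ (-(1 / ε - 1)) * r * (1 + D / r) ^ (-(1 / ε - 1)) ≤ u := by
  have hs : 0 < 2 * (r + D) := by positivity
  have hdiv : r * (2 * (r + D)) ^ (ε - 1) ≤ u ^ ε := by
    rwa [show ε - 1 = -(1 - ε) by ring, rpow_neg hs.le, mul_inv_le_iff₀ (by positivity)]
  have hsplit : r * (2 * (r + D)) ^ (ε - 1) = r ^ ε * (2 * (1 + D / r)) ^ (ε - 1) := by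
    rw [show 2 * (r + D) = 2 * (1 + D / r) * r by field_simp, mul_rpow (by positivity) hr.le,
      mul_left_comm, ← rpow_one_add' hr.le (by simpa using hε.ne')]
    ring_nf
  rw [← rpow_le_rpow_iff (by positivity) hu hε, mul_comm _ r, mul_assoc,
    ← mul_rpow (by norm_num) (by positivity), mul_rpow hr.le (by positivity),
    ← rpow_mul (by positivity), show -(1 / ε - 1) * ε = ε - 1 by field_simp; ring, ← hsplit]
  exact hdiv

namespace SlowGrowth

variable {X : Type*} [PseudoMetricSpace X] {Ω : Set X} {ρ : X → ℝ} {x y : X}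

lemma le_add_dist {γ : ℝ} (h : SlowGrowth Ω ρ γ) (hγ : γ ≤ 1) (hx : x ∈ Ω) (hy : y ∈ Ω)
    (hρx : 0 < ρ x) : ρ y ≤ ρ x + dist x y :=
  (h x hx y hy).trans (mul_rpow_one_add_div_le hρx dist_nonneg hγ)

lemma le_rpow_mul_rpow {γ : ℝ} (h : SlowGrowth Ω ρ γ) (hx : x ∈ Ω) (hy : y ∈ Ω)
    (hρy : 0 < ρ y) : ρ x ≤ ρ y ^ (1 - γ) * (ρ y + dist x y) ^ γ := by
  rw [← mul_rpow_one_add_div_eq hρy dist_nonneg, dist_comm]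
  exact h y hy x hx

lemma le_rpow_mul_two_mul_rpow {ε : ℝ} (h : SlowGrowth Ω ρ (1 - ε)) (hε0 : 0 ≤ ε)
    (hε1 : ε ≤ 1) (hρ : ∀ z ∈ Ω, 0 < ρ z) (hx : x ∈ Ω) (hy : y ∈ Ω) :
    ρ x ≤ ρ y ^ ε * (2 * (ρ x + dist x y)) ^ (1 - ε) :=
  calc ρ x ≤ ρ y ^ ε * (ρ y + dist x y) ^ (1 - ε) := by
        simpa using h.le_rpow_mul_rpow hx hy (hρ y hy)
    _ ≤ ρ y ^ ε * (2 * (ρ x + dist x y)) ^ (1 - ε) := by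
        have hρx := hρ x hx
        have hρy := hρ y hy
        have hyx := h.le_add_dist (by linarith) hx hy hρx
        have hD : 0 ≤ dist x y := dist_nonneg
        exact mul_le_mul_of_nonneg_left (rpow_le_rpow (by linarith) (by linarith) (by linarith))
          (rpow_nonneg hρy.le ε)

theorem selfMajorization {ε : ℝ} (h : SlowGrowth Ω ρ (1 - ε)) (hε0 : 0 < ε) (hε1 : ε ≤ 1)
    (hρ : ∀ z ∈ Ω, 0 < ρ z) (hx : x ∈ Ω) (hy : y ∈ Ω) :
    2 ^ (-(1 / ε - 1)) * ρ x * (1 + dist x y / ρ x) ^ (-(1 / ε - 1)) ≤ ρ y :=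
  two_rpow_neg_mul_le_of_le_rpow_mul_rpow (hρ x hx) (hρ y hy).le dist_nonneg hε0
    (h.le_rpow_mul_two_mul_rpow hε0.le hε1 hρ hx hy)

end SlowGrowth

/-- Slow growth implies self-majorization of order τ = 1/ε − 1. -/
theorem stmt0 (d : ℕ) (Ω : Set (EuclideanSpace ℝ (Fin d)))
    (ρ : EuclideanSpace ℝ (Fin d) → ℝ) (ε : ℝ) (hε0 : 0 < ε) (hε1 : ε < 1)
    (hρ : ∀ x ∈ Ω, 0 < ρ x)
    (hsg : ∀ x ∈ Ω, ∀ α ∈ Ω, ρ α ≤ ρ x * (1 + dist x α / ρ x) ^ (1 - ε)) :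
    ∃ C : ℝ, 0 < C ∧ ∀ x ∈ Ω, ∀ y ∈ Ω,
      ρ y ≥ C * ρ x * (1 + dist x y / ρ x) ^ (-(1 / ε - 1)) :=
  ⟨2 ^ (-(1 / ε - 1)), by positivity, fun _ hx _ hy =>
    SlowGrowth.selfMajorization (Ω := Ω) hsg hε0 hε1.le hρ hx hy⟩
end

section
/- Conversely, if ρ: Ω → (0,∞) satisfies self-majorization of order τ with constant C_sm, then ρ satisfies (1−ε) slow growth with ε = 1/(τ+1), possibly up to a constant: ρ(α) ≤ C' ρ(x)(1 + |x−α|/ρ(x))^{1−ε} for all x, α ∈ Ω, where C' depends only on τ and C_sm. -/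
/-!
Swapping the roles of the two points in self-majorization gives, after dividing by `ρ x`,
`C u (1 + v/u)^(-τ) ≤ 1` for `u = ρ α / ρ x` and `v = dist x α / ρ x`. If `v ≤ u`, then
`1 + v/u ≤ 2` and `u ≤ 2^τ / C`. If `u ≤ v`, then `1 + v/u ≤ 2 (1 + v) / u`, which turns the
inequality into `u^(τ+1) ≤ (2^τ / C) (1 + v)^τ`, and taking the `(τ+1)`-th root gives
`u ≲ (1 + v)^(τ/(τ+1))`.
-/

open Real

variable {X : Type*} [PseudoMetricSpace X]

def IsSelfMajorizing (Ω : Set X) (ρ : X → ℝ) (τ C : ℝ) : Prop :=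
  ∀ x ∈ Ω, ∀ y ∈ Ω, C * ρ x * (1 + dist x y / ρ x) ^ (-τ) ≤ ρ y

def HasSlowGrowth (Ω : Set X) (ρ : X → ℝ) (ε C : ℝ) : Prop :=
  ∀ x ∈ Ω, ∀ α ∈ Ω, ρ α ≤ C * ρ x * (1 + dist x α / ρ x) ^ (1 - ε)

namespace IsSelfMajorizing

variable {τ c u v : ℝ}

lemma le_two_rpow_div_of_le (hu : 0 < u) (hv : 0 ≤ v) (hvu : v ≤ u) (hτ : 0 ≤ τ) (hc : 0 < c)
    (h : c * u * (1 + v / u) ^ (-τ) ≤ 1) : u ≤ 2 ^ τ / c := by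
  have hvu' : v / u ≤ 1 := (div_le_one hu).2 hvu
  have h2 : (2 : ℝ) ^ (-τ) ≤ (1 + v / u) ^ (-τ) :=
    rpow_le_rpow_of_nonpos (by positivity) (by linarith) (neg_nonpos.2 hτ)
  have hcu : c * u * (2 ^ τ)⁻¹ ≤ 1 := by
    rw [← rpow_neg zero_le_two]
    exact (mul_le_mul_of_nonneg_left h2 (by positivity)).trans h
  rw [le_div_iff₀ hc, mul_comm]
  rwa [mul_inv_le_iff₀ (by positivity), one_mul] at hcu

lemma le_rpow_mul_one_add_rpow_of_le (hu : 0 < u) (huv : u ≤ v) (hτ : 0 ≤ τ) (hc : 0 < c)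
    (h : c * u * (1 + v / u) ^ (-τ) ≤ 1) :
    u ≤ (2 ^ τ / c) ^ (1 / (τ + 1)) * (1 + v) ^ (1 - 1 / (τ + 1)) := by
  have hv : 0 ≤ v := hu.le.trans huv
  have hτ1 : 0 < τ + 1 := by linarith
  have hbase : 1 + v / u ≤ 2 * (1 + v) / u := by
    rw [le_div_iff₀ hu, add_mul, one_mul, div_mul_cancel₀ v hu.ne']
    linarith
  have hpow : u ^ (τ + 1) ≤ 2 ^ τ / c * (1 + v) ^ τ := by
    have h1 : (2 * (1 + v) / u) ^ (-τ) ≤ (1 + v / u) ^ (-τ) :=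
      rpow_le_rpow_of_nonpos (by positivity) hbase (neg_nonpos.2 hτ)
    have h2 : c * u * (2 * (1 + v) / u) ^ (-τ) ≤ 1 :=
      (mul_le_mul_of_nonneg_left h1 (by positivity)).trans h
    rw [rpow_neg (by positivity), div_rpow (by positivity) hu.le,
      mul_rpow zero_le_two (by positivity), inv_div, mul_div_assoc',
      div_le_one (by positivity)] at h2
    rw [rpow_add_one hu.ne', div_mul_eq_mul_div, le_div_iff₀ hc]
    linarith
  have hexp : τ * (τ + 1)⁻¹ = 1 - (τ + 1)⁻¹ := by field_simp; ring
  rw [one_div, ← hexp, rpow_mul (by positivity), ← mul_rpow (by positivity) (by positivity)]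
  exact (le_rpow_inv_iff_of_pos hu.le (by positivity) hτ1).2 hpow

lemma le_max_mul_one_add_rpow (hu : 0 < u) (hv : 0 ≤ v) (hτ : 0 ≤ τ) (hc : 0 < c)
    (h : c * u * (1 + v / u) ^ (-τ) ≤ 1) :
    u ≤ max (2 ^ τ / c) ((2 ^ τ / c) ^ (1 / (τ + 1))) * (1 + v) ^ (1 - 1 / (τ + 1)) := by
  have hexp : 0 ≤ 1 - 1 / (τ + 1) := by
    rw [sub_nonneg, div_le_one (by linarith)]; linarith
  have hw : 1 ≤ (1 + v) ^ (1 - 1 / (τ + 1)) := one_le_rpow (by linarith) hexp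
  rcases le_total v u with hvu | huv
  · calc u ≤ 2 ^ τ / c := le_two_rpow_div_of_le hu hv hvu hτ hc h
      _ ≤ max (2 ^ τ / c) ((2 ^ τ / c) ^ (1 / (τ + 1))) := le_max_left _ _
      _ ≤ _ := le_mul_of_one_le_right (by positivity) hw
  · exact (le_rpow_mul_one_add_rpow_of_le hu huv hτ hc h).trans
      (mul_le_mul_of_nonneg_right (le_max_right _ _) (by positivity))

theorem hasSlowGrowth {Ω : Set X} {ρ : X → ℝ} (hρ : ∀ x ∈ Ω, 0 < ρ x) (hτ : 0 ≤ τ) (hc : 0 < c)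
    (h : IsSelfMajorizing Ω ρ τ c) :
    HasSlowGrowth Ω ρ (1 / (τ + 1)) (max (2 ^ τ / c) ((2 ^ τ / c) ^ (1 / (τ + 1)))) := by
  intro x hx α hα
  have hρx := hρ x hx
  have hρα := hρ α hα
  have hnorm : c * (ρ α / ρ x) * (1 + dist x α / ρ x / (ρ α / ρ x)) ^ (-τ) ≤ 1 := by
    rw [div_div_div_cancel_right₀ hρx.ne', dist_comm, mul_div_assoc', div_mul_eq_mul_div,
      div_le_one hρx]
    exact h α hα x hx
  have hbound := le_max_mul_one_add_rpow (div_pos hρα hρx) (by positivity) hτ hc hnorm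
  rw [div_le_iff₀' hρx] at hbound
  linarith

end IsSelfMajorizing

/-- Self-majorization of order τ implies (1−ε) slow growth with ε = 1/(τ+1),
up to a constant depending only on τ and C_sm. -/
theorem stmt1 (d : ℕ) (Ω : Set (EuclideanSpace ℝ (Fin d)))
    (ρ : EuclideanSpace ℝ (Fin d) → ℝ) (τ Csm : ℝ) (hτ : 0 < τ) (hCsm : 0 < Csm)
    (hρ : ∀ x ∈ Ω, 0 < ρ x)
    (hsm : ∀ x ∈ Ω, ∀ y ∈ Ω, ρ y ≥ Csm * ρ x * (1 + dist x y / ρ x) ^ (-τ)) :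
    ∃ C' : ℝ, 0 < C' ∧ ∀ x ∈ Ω, ∀ α ∈ Ω,
      ρ α ≤ C' * ρ x * (1 + dist x α / ρ x) ^ (1 - 1 / (τ + 1)) :=
  ⟨_, lt_max_of_lt_left (by positivity), IsSelfMajorizing.hasSlowGrowth hρ hτ.le hCsm hsm⟩
end

section
/- For every ℓ ∈ ℕ and d ≥ 1 there is a constant c_ℓ such that for every polynomial p of degree ≤ ℓ on ℝ^d and every point ξ, ‖p‖_{L∞(B(0,1))} ≤ c_ℓ ‖p‖_{L∞(B(0,1) \ B(ξ,1/2))}. -/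
/-!
Pick `x` with `‖x‖ = 3/4` on the side of the origin opposite to `ξ`. The closed ball of radius
`1/8` around `x` then lies in `B(0,1) \ B(ξ,1/2)`, while `B(0,1) ⊆ B(x,7/4)`. Polynomials of degree
`≤ ℓ` form a finite-dimensional space on which "sup over a ball of radius `1/8`" is a norm
(a polynomial vanishing on an open set is zero), so by equivalence of norms it controls the sup over
the concentric ball of radius `7/4`. Translating `x` to the origin keeps the degree and makes the
constant independent of `ξ`.
-/

open MvPolynomial Metric

/-- Evaluation of a multivariate polynomial at a point of ℝ^d. -/
noncomputable def pev {d : ℕ} (p : MvPolynomial (Fin d) ℝ)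
    (y : EuclideanSpace ℝ (Fin d)) : ℝ :=
  MvPolynomial.eval (fun i => y i) p

theorem LinearMap.exists_norm_le_mul_norm_of_injective {𝕜 V E F : Type*}
    [NontriviallyNormedField 𝕜] [CompleteSpace 𝕜] [AddCommGroup V] [Module 𝕜 V]
    [FiniteDimensional 𝕜 V] [NormedAddCommGroup E] [NormedSpace 𝕜 E]
    [SeminormedAddCommGroup F] [NormedSpace 𝕜 F]
    (T : V →ₗ[𝕜] E) (hT : Function.Injective T) (S : V →ₗ[𝕜] F) :
    ∃ C, 0 ≤ C ∧ ∀ v, ‖S v‖ ≤ C * ‖T v‖ := by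
  let e := LinearEquiv.ofInjective T hT
  let Φ := LinearMap.toContinuousLinearMap (S ∘ₗ e.symm.toLinearMap)
  refine ⟨‖Φ‖, norm_nonneg Φ, fun v => ?_⟩
  have hev : ‖e v‖ = ‖T v‖ := rfl
  simpa [Φ, hev] using Φ.le_opNorm (e v)

lemma MvPolynomial.totalDegree_bind₁_le {σ τ R : Type*} [CommSemiring R]
    {f : σ → MvPolynomial τ R} (hf : ∀ i, (f i).totalDegree ≤ 1) (p : MvPolynomial σ R) :
    (bind₁ f p).totalDegree ≤ p.totalDegree := by
  conv_lhs => rw [p.as_sum]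
  rw [map_sum]
  refine (totalDegree_finsetSum _ _).trans (Finset.sup_le fun v hv => ?_)
  rw [bind₁_monomial]
  refine (totalDegree_mul _ _).trans ?_
  rw [totalDegree_C, zero_add]
  refine (totalDegree_finsetProd _ _).trans ?_
  calc ∑ i ∈ v.support, (f i ^ v i).totalDegree
      ≤ ∑ i ∈ v.support, v i := Finset.sum_le_sum fun i _ =>
        (totalDegree_pow _ _).trans (by simpa using Nat.mul_le_mul_left (v i) (hf i))
    _ ≤ p.totalDegree := le_totalDegree hv

section Polynomials

variable {d : ℕ}

lemma continuous_pev (p : MvPolynomial (Fin d) ℝ) : Continuous (pev p) :=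
  (continuous_eval p).comp (PiLp.continuous_ofLp 2 _)

lemma analyticOnNhd_pev (p : MvPolynomial (Fin d) ℝ) : AnalyticOnNhd ℝ (pev p) Set.univ :=
  AnalyticOnNhd.eval_linearMap (WithLp.linearEquiv 2 ℝ (Fin d → ℝ)).toLinearMap p

lemma eq_zero_of_pev_eventuallyEq_zero {p : MvPolynomial (Fin d) ℝ}
    {a : EuclideanSpace ℝ (Fin d)} (h : pev p =ᶠ[nhds a] 0) : p = 0 := by
  have hp : pev p = 0 := (analyticOnNhd_pev p).eq_of_eventuallyEq analyticOnNhd_const h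
  refine MvPolynomial.funext fun x => ?_
  simpa [pev] using congrFun hp (WithLp.toLp 2 x)

variable (d) in
noncomputable def evalOnClosedBall (ℓ : ℕ) (r : ℝ) :
    restrictTotalDegree (Fin d) ℝ ℓ →ₗ[ℝ] C(closedBall (0 : EuclideanSpace ℝ (Fin d)) r, ℝ) where
  toFun p := ⟨fun y => pev p.1 y, (continuous_pev p.1).comp continuous_subtype_val⟩
  map_add' p q := by ext y; simp [pev]
  map_smul' c p := by ext y; simp [pev, smul_eq_C_mul]

lemma evalOnClosedBall_injective {ℓ : ℕ} {r : ℝ} (hr : 0 < r) :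
    Function.Injective (evalOnClosedBall d ℓ r) := by
  refine (injective_iff_map_eq_zero _).2 fun p hp => Subtype.ext ?_
  refine eq_zero_of_pev_eventuallyEq_zero (a := 0) ?_
  filter_upwards [closedBall_mem_nhds (0 : EuclideanSpace ℝ (Fin d)) hr] with y hy
  exact congrArg (· ⟨y, hy⟩) hp

variable (d) in
theorem exists_abs_pev_closedBall_le_mul (ℓ : ℕ) {r : ℝ} (hr : 0 < r) (R : ℝ) :
    ∃ C, 0 < C ∧ ∀ p : MvPolynomial (Fin d) ℝ, p.totalDegree ≤ ℓ → ∀ B : ℝ,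
      (∀ z ∈ closedBall 0 r, |pev p z| ≤ B) → ∀ y ∈ closedBall 0 R, |pev p y| ≤ C * B := by
  have : CompactSpace (closedBall (0 : EuclideanSpace ℝ (Fin d)) r) :=
    isCompact_iff_compactSpace.mp (isCompact_closedBall _ _)
  have : CompactSpace (closedBall (0 : EuclideanSpace ℝ (Fin d)) R) :=
    isCompact_iff_compactSpace.mp (isCompact_closedBall _ _)
  obtain ⟨C, hC, hbound⟩ := (evalOnClosedBall d ℓ r).exists_norm_le_mul_norm_of_injective
    (evalOnClosedBall_injective hr) (evalOnClosedBall d ℓ R)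
  refine ⟨C + 1, by linarith, fun p hp B hB y hy => ?_⟩
  have hB0 : 0 ≤ B := (abs_nonneg _).trans (hB 0 (mem_closedBall_self hr.le))
  let q : restrictTotalDegree (Fin d) ℝ ℓ := ⟨p, (mem_restrictTotalDegree _ _ _).2 hp⟩
  have hq : ‖evalOnClosedBall d ℓ r q‖ ≤ B :=
    (ContinuousMap.norm_le _ hB0).2 fun z => hB z.1 z.2
  calc |pev p y| = ‖evalOnClosedBall d ℓ R q ⟨y, hy⟩‖ := rfl
    _ ≤ ‖evalOnClosedBall d ℓ R q‖ := ContinuousMap.norm_coe_le_norm _ _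
    _ ≤ C * ‖evalOnClosedBall d ℓ r q‖ := hbound q
    _ ≤ (C + 1) * B := by gcongr; linarith

noncomputable def translatePoly (a : EuclideanSpace ℝ (Fin d)) :
    MvPolynomial (Fin d) ℝ →ₐ[ℝ] MvPolynomial (Fin d) ℝ :=
  bind₁ fun i => X i + C (a i)

lemma pev_translatePoly (a : EuclideanSpace ℝ (Fin d)) (p : MvPolynomial (Fin d) ℝ)
    (w : EuclideanSpace ℝ (Fin d)) : pev (translatePoly a p) w = pev p (w + a) := by
  change eval₂Hom (RingHom.id ℝ) _ (bind₁ _ p) = _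
  simp [eval₂Hom_bind₁, pev]

lemma totalDegree_translatePoly_le (a : EuclideanSpace ℝ (Fin d)) (p : MvPolynomial (Fin d) ℝ) :
    (translatePoly a p).totalDegree ≤ p.totalDegree :=
  totalDegree_bind₁_le (fun i => (totalDegree_add _ _).trans <| by simp) p

end Polynomials

lemma exists_norm_eq_le_dist {E : Type*} [NormedAddCommGroup E] [NormedSpace ℝ E] [Nontrivial E]
    (ξ : E) {s : ℝ} (hs : 0 ≤ s) : ∃ x : E, ‖x‖ = s ∧ s ≤ dist x ξ := by
  rcases eq_or_ne ξ 0 with rfl | hξ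
  · obtain ⟨x, hx⟩ := exists_norm_eq E hs
    exact ⟨x, hx, by rw [dist_zero_right, hx]⟩
  · have hξ' : 0 < ‖ξ‖ := norm_pos_iff.2 hξ
    refine ⟨-(s / ‖ξ‖) • ξ, by simp [norm_smul, abs_of_nonneg hs, hξ'.ne'], ?_⟩
    rw [dist_eq_norm, show -(s / ‖ξ‖) • ξ - ξ = -((s / ‖ξ‖ + 1) • ξ) by module, norm_neg,
      norm_smul, Real.norm_of_nonneg (by positivity), add_mul, div_mul_cancel₀ _ hξ'.ne']
    linarith

lemma add_mem_ball_diff_ball {E : Type*} [NormedAddCommGroup E] {x ξ z : E} (hx : ‖x‖ = 3 / 4)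
    (hxξ : 3 / 4 ≤ dist x ξ) (hz : ‖z‖ ≤ 1 / 8) : z + x ∈ ball 0 1 \ ball ξ (1 / 2) := by
  refine ⟨?_, fun hξ => ?_⟩
  · rw [mem_ball_zero_iff]
    linarith [norm_add_le z x]
  · rw [mem_ball] at hξ
    have : dist x (z + x) = ‖z‖ := by rw [dist_comm, dist_eq_norm, add_sub_cancel_right]
    linarith [dist_triangle x (z + x) ξ]

/-- There is a constant c_ℓ, depending only on ℓ and d, such that the sup norm of any
polynomial of degree ≤ ℓ on B(0,1) is controlled by its sup norm on B(0,1) \ B(ξ,1/2),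
uniformly in ξ. -/
theorem stmt7 (d ℓ : ℕ) (hd : 1 ≤ d) :
    ∃ c : ℝ, 0 < c ∧ ∀ p : MvPolynomial (Fin d) ℝ, p.totalDegree ≤ ℓ →
      ∀ (ξ : EuclideanSpace ℝ (Fin d)) (B : ℝ), 0 ≤ B →
        (∀ z ∈ Metric.ball (0 : EuclideanSpace ℝ (Fin d)) 1 \ Metric.ball ξ (1/2),
          |pev p z| ≤ B) →
        ∀ y ∈ Metric.ball (0 : EuclideanSpace ℝ (Fin d)) 1, |pev p y| ≤ c * B := by
  have : Nonempty (Fin d) := ⟨⟨0, hd⟩⟩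
  obtain ⟨C, hC, hbound⟩ := exists_abs_pev_closedBall_le_mul d ℓ (r := 1 / 8) (by norm_num) (7 / 4)
  refine ⟨C, hC, fun p hp ξ B _ hB y hy => ?_⟩
  obtain ⟨x, hx, hxξ⟩ := exists_norm_eq_le_dist ξ (s := 3 / 4) (by norm_num)
  have hyx : y - x ∈ closedBall 0 (7 / 4) := by
    rw [mem_closedBall_zero_iff]
    linarith [norm_sub_le y x, mem_ball_zero_iff.1 hy]
  have hsmall : ∀ z ∈ closedBall 0 (1 / 8), |pev (translatePoly x p) z| ≤ B := fun z hz => by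
    rw [pev_translatePoly]
    exact hB _ (add_mem_ball_diff_ball hx hxξ (mem_closedBall_zero_iff.1 hz))
  simpa [pev_translatePoly] using
    hbound _ ((totalDegree_translatePoly_le x p).trans hp) B hsmall (y - x) hyx
end
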